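/- arXiv:2309.08875 — 4 statements merged into one kernel-verified Lean document; each statement's English description precedes it below -/
import Mathlib

section
/- Composition of contracts over a Boolean algebra B distributes over both conjunction and disjunction: for all contracts C, C', C'', C ∥ (C' ∧ C'') = (C ∥ C') ∧ (C ∥ C'') and C ∥ (C' ∨ C'') = (C ∥ C') ∨ (C ∥ C''). -/
variable {B : Type*} [BooleanAlgebra B]

/-- A contract over a Boolean algebra is a pair `(a, g)` with `a ⊔ g = ⊤`. -/
def IsContract (C : B × B) : Prop := C.1 ⊔ C.2 = ⊤

/-- Refinement order: `(a, g) ≤ (a', g')` iff `g ≤ g'` and `a' ≤ a`. -/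
def cLe (C C' : B × B) : Prop := C.2 ≤ C'.2 ∧ C'.1 ≤ C.1

/-- Conjunction of contracts. -/
def cAnd (C C' : B × B) : B × B := (C.1 ⊔ C'.1, C.2 ⊓ C'.2)

/-- Disjunction of contracts. -/
def cOr (C C' : B × B) : B × B := (C.1 ⊓ C'.1, C.2 ⊔ C'.2)

/-- Composition of contracts. -/
def cComp (C C' : B × B) : B × B := ((C.1 ⊓ C'.1) ⊔ (C.2 ⊓ C'.2)ᶜ, C.2 ⊓ C'.2)

/-- Merging of contracts. -/
def cMerge (C C' : B × B) : B × B := (C.1 ⊓ C'.1, (C.2 ⊓ C'.2) ⊔ (C.1 ⊓ C'.1)ᶜ)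

/-- Reciprocal of a contract. -/
def cRecip (C : B × B) : B × B := (C.2, C.1)

/-- Quotient of contracts. -/
def cQuot (C C' : B × B) : B × B := (C.1 ⊓ C'.2, (C.2 ⊓ C'.1) ⊔ (C.1 ⊓ C'.2)ᶜ)

/-- Separation of contracts. -/
def cSep (C C' : B × B) : B × B := ((C.1 ⊓ C'.2) ⊔ (C.2 ⊓ C'.1)ᶜ, C.2 ⊓ C'.1)

/-- Implication of contracts: `cImp C' C` is `C' → C`. -/
def cImp (C' C : B × B) : B × B := ((C.1 ⊓ (C'.1)ᶜ) ⊔ (C'.2 ⊓ (C.2)ᶜ), C.2 ⊔ (C'.2)ᶜ)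

/-- Coimplication of contracts: `cCoimp C' C` is `C' ↛ C`. -/
def cCoimp (C' C : B × B) : B × B := (C.1 ⊔ (C'.1)ᶜ, (C.2 ⊓ (C'.2)ᶜ) ⊔ (C'.1 ⊓ (C.1)ᶜ))

/-- The bottom contract `0 = (⊤, ⊥)`. -/
def cZero : B × B := (⊤, ⊥)

/-- The top contract `1 = (⊥, ⊤)`. -/
def cOne : B × B := (⊥, ⊤)

/-- The identity contract `e = (⊤, ⊤)`. -/
def cE : B × B := (⊤, ⊤)

/-- Left action of `b : B` on contracts: `b · (a, g) = (b ⊓ a, ¬b ⊔ g)`. -/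
def lAct (b : B) (C : B × B) : B × B := (b ⊓ C.1, bᶜ ⊔ C.2)

/-- Right action of `b : B` on contracts: `(a, g) · b = (¬b ⊔ a, b ⊓ g)`. -/
def rAct (C : B × B) (b : B) : B × B := (bᶜ ⊔ C.1, b ⊓ C.2)

/-! Composition meets guarantees, so it commutes with `⊓` on guarantees, and its assumption
`(a ⊓ a') ⊔ ¬g ⊔ ¬g'` distributes over joins, which gives the conjunction law for free. For the
disjunction law, a contract satisfies `¬g' ≤ a'`, so by the modular law
`(a ⊓ a') ⊔ ¬g' = (a ⊔ ¬g') ⊓ a'`; in this form the meet of the assumptions of `C ∥ C'` and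
`C ∥ C''` collapses to the assumption of `C ∥ (C' ∨ C'')`. -/

theorem IsContract.compl_snd_le {C : B × B} (hC : IsContract C) : C.2ᶜ ≤ C.1 :=
  codisjoint_iff_compl_le_left.mp (codisjoint_iff.mpr hC)

theorem inf_sup_inf_inf_sup_of_le {α : Type*} [DistribLattice α] {x a b u v : α}
    (hu : u ≤ a) (hv : v ≤ b) : (x ⊓ a ⊔ u) ⊓ (x ⊓ b ⊔ v) = x ⊓ (a ⊓ b) ⊔ u ⊓ v :=
  calc (x ⊓ a ⊔ u) ⊓ (x ⊓ b ⊔ v) = (x ⊔ u) ⊓ a ⊓ ((x ⊔ v) ⊓ b) := by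
        rw [inf_comm x a, inf_comm x b, inf_sup_assoc_of_le _ hu, inf_sup_assoc_of_le _ hv,
          inf_comm a, inf_comm b]
    _ = (x ⊔ u) ⊓ (x ⊔ v) ⊓ (a ⊓ b) := inf_inf_inf_comm _ _ _ _
    _ = x ⊓ (a ⊓ b) ⊔ u ⊓ v := by
        rw [← sup_inf_left, inf_comm, ← inf_sup_assoc_of_le _ (inf_le_inf hu hv), inf_comm]

theorem cComp_cAnd (C C' C'' : B × B) :
    cComp C (cAnd C' C'') = cAnd (cComp C C') (cComp C C'') := by
  obtain ⟨a, g⟩ := C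
  obtain ⟨a', g'⟩ := C'
  obtain ⟨a'', g''⟩ := C''
  simp only [cComp, cAnd, Prod.mk.injEq]
  rw [inf_sup_left, inf_inf_distrib_left, compl_inf, sup_sup_sup_comm]
  exact ⟨rfl, rfl⟩

theorem cComp_cOr (C : B × B) {C' C'' : B × B} (hC' : IsContract C') (hC'' : IsContract C'') :
    cComp C (cOr C' C'') = cOr (cComp C C') (cComp C C'') := by
  obtain ⟨a, g⟩ := C
  obtain ⟨a', g'⟩ := C'
  obtain ⟨a'', g''⟩ := C''
  simp only [cComp, cOr, Prod.mk.injEq]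
  refine ⟨?_, inf_sup_left g g' g''⟩
  rw [compl_inf, compl_sup, compl_inf, compl_inf, sup_left_comm (a ⊓ (a' ⊓ a'')),
    sup_left_comm (a ⊓ a'), sup_left_comm (a ⊓ a''),
    ← sup_inf_left, inf_sup_inf_inf_sup_of_le hC'.compl_snd_le hC''.compl_snd_le]

theorem composition_distributes_over_conjunction_and_disjunction_general
    (C C' C'' : B × B) (hC' : IsContract C') (hC'' : IsContract C'') :
    cComp C (cAnd C' C'') = cAnd (cComp C C') (cComp C C'') ∧
    cComp C (cOr C' C'') = cOr (cComp C C') (cComp C C'') :=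
  ⟨cComp_cAnd C C' C'', cComp_cOr C hC' hC''⟩

theorem composition_distributes_over_conjunction_and_disjunction
    (C C' C'' : B × B) (hC : IsContract C) (hC' : IsContract C') (hC'' : IsContract C'') :
    cComp C (cAnd C' C'') = cAnd (cComp C C') (cComp C C'') ∧
    cComp C (cOr C' C'') = cOr (cComp C C') (cComp C C'') :=
  composition_distributes_over_conjunction_and_disjunction_general C C' C'' hC' hC''
end

section
/- For all contracts C, C', C'' over a Boolean algebra B, conjunction distributes over composition and disjunction distributes over merging: C ∧ (C' ∥ C'') = (C ∧ C') ∥ (C ∧ C'') and C ∨ (C' • C'') = (C ∨ C') • (C ∨ C''). -/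
variable {B : Type*} [BooleanAlgebra B]

theorem IsContract.cRecip {C : B × B} (hC : IsContract C) : IsContract (cRecip C) :=
  (sup_comm C.2 C.1).trans hC

theorem sup_inf_sup_sup_compl_inf_inf_inf {a b c g u v : B} (hg : gᶜ ≤ a) :
    (a ⊔ b) ⊓ (a ⊔ c) ⊔ (g ⊓ u ⊓ (g ⊓ v))ᶜ = a ⊔ (b ⊓ c ⊔ (u ⊓ v)ᶜ) := by
  calc (a ⊔ b) ⊓ (a ⊔ c) ⊔ (g ⊓ u ⊓ (g ⊓ v))ᶜ
      = (a ⊔ gᶜ) ⊔ (b ⊓ c ⊔ (u ⊓ v)ᶜ) := by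
        rw [← sup_inf_left, ← inf_inf_distrib_left, compl_inf]; ac_rfl
    _ = a ⊔ (b ⊓ c ⊔ (u ⊓ v)ᶜ) := by rw [sup_eq_left.mpr hg]

theorem cAnd_cComp_distrib {C : B × B} (hC : IsContract C) (C' C'' : B × B) :
    cAnd C (cComp C' C'') = cComp (cAnd C C') (cAnd C C'') :=
  Prod.ext (sup_inf_sup_sup_compl_inf_inf_inf hC.compl_snd_le).symm
    (inf_inf_distrib_left ..)

/-- Swapping assumption and guarantee turns `cOr` into `cAnd` and `cMerge` into `cComp`. -/
theorem cOr_cMerge_distrib {C : B × B} (hC : IsContract C) (C' C'' : B × B) :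
    cOr C (cMerge C' C'') = cMerge (cOr C C') (cOr C C'') :=
  calc cOr C (cMerge C' C'')
      = cRecip (cAnd (cRecip C) (cComp (cRecip C') (cRecip C''))) := rfl
    _ = cRecip (cComp (cAnd (cRecip C) (cRecip C')) (cAnd (cRecip C) (cRecip C''))) := by
        rw [cAnd_cComp_distrib hC.cRecip]
    _ = cMerge (cOr C C') (cOr C C'') := rfl

theorem conjunction_distributes_over_composition_and_disjunction_over_merging_general
    (C C' C'' : B × B) (hC : IsContract C) :
    cAnd C (cComp C' C'') = cComp (cAnd C C') (cAnd C C'') ∧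
    cOr C (cMerge C' C'') = cMerge (cOr C C') (cOr C C'') :=
  ⟨cAnd_cComp_distrib hC C' C'', cOr_cMerge_distrib hC C' C''⟩

theorem conjunction_distributes_over_composition_and_disjunction_over_merging
    (C C' C'' : B × B) (hC : IsContract C) (hC' : IsContract C') (hC'' : IsContract C'') :
    cAnd C (cComp C' C'') = cComp (cAnd C C') (cAnd C C'') ∧
    cOr C (cMerge C' C'') = cMerge (cOr C C') (cOr C C'') :=
  conjunction_distributes_over_composition_and_disjunction_over_merging_general C C' C'' hC
end

section
/- Over a Boolean algebra B, the contracts form two semirings: (contracts, ∥, ∨, e, 0) and (contracts, •, ∧, e, 1); in particular 0 is absorbing for composition (C ∥ 0 = 0 for every contract C) and 1 is absorbing for merging (C • 1 = 1 for every contract C). Moreover, the reciprocal map C ↦ C⁻¹ is a semiring isomorphism between these two semirings: it is an involution satisfying (C ∥ C')⁻¹ = C⁻¹ • (C')⁻¹, (C ∨ C')⁻¹ = C⁻¹ ∧ (C')⁻¹, e⁻¹ = e, and 0⁻¹ = 1. -/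
variable {B : Type*} [BooleanAlgebra B]

/-!
Writing `⇨` for the Heyting implication of `B`, the composition of `(a, g)` and `(a', g')` is
`(g ⊓ g' ⇨ a ⊓ a', g ⊓ g')`, and `(a, g)` is a contract exactly when `g ⇨ a = a`. The
composition laws are then Heyting-algebra identities. Merging, conjunction, `1` and `e` are
definitionally the conjugates of composition, disjunction, `0` and `e` by the reciprocal, so the
merging semiring and the isomorphism come for free.
-/

theorem himp_inf_himp_of_le {α : Type*} [GeneralizedHeytingAlgebra α] {w v : α} (h : w ≤ v)
    (x y : α) : w ⇨ x ⊓ (v ⇨ y) = w ⇨ x ⊓ y := by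
  rw [himp_inf_distrib, himp_himp, inf_eq_left.2 h, ← himp_inf_distrib]

theorem isContract_iff_codisjoint {C : B × B} : IsContract C ↔ Codisjoint C.1 C.2 :=
  codisjoint_iff.symm

theorem IsContract.himp_eq {C : B × B} (hC : IsContract C) : C.2 ⇨ C.1 = C.1 := by
  rw [_root_.himp_eq, sup_eq_left]
  exact codisjoint_iff_compl_le_left.1 (isContract_iff_codisjoint.1 hC)

theorem IsContract.inf_himp {C : B × B} (hC : IsContract C) (u : B) :
    u ⊓ C.2 ⇨ C.1 = u ⇨ C.1 := by
  rw [← himp_himp, hC.himp_eq]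

theorem IsContract.cOr {C C' : B × B} (hC : IsContract C) (hC' : IsContract C') :
    IsContract (cOr C C') := by
  rw [isContract_iff_codisjoint] at *
  exact (hC.mono_right le_sup_left).inf_left (hC'.mono_right le_sup_right)

theorem cComp_eq_himp (C C' : B × B) :
    cComp C C' = (C.2 ⊓ C'.2 ⇨ C.1 ⊓ C'.1, C.2 ⊓ C'.2) := by
  rw [himp_eq]; rfl

theorem cOr_assoc (C C' C'' : B × B) : cOr C (cOr C' C'') = cOr (cOr C C') C'' :=
  Prod.ext (inf_assoc _ _ _).symm (sup_assoc _ _ _).symm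

theorem cOr_comm (C C' : B × B) : cOr C C' = cOr C' C :=
  Prod.ext (inf_comm _ _) (sup_comm _ _)

theorem cOr_cZero (C : B × B) : cOr C cZero = C :=
  Prod.ext (inf_top_eq _) (sup_bot_eq _)

theorem cComp_comm (C C' : B × B) : cComp C C' = cComp C' C := by
  simp only [cComp_eq_himp, inf_comm]

theorem cComp_assoc (C C' C'' : B × B) : cComp C (cComp C' C'') = cComp (cComp C C') C'' := by
  simp only [cComp_eq_himp, Prod.mk.injEq]
  refine ⟨?_, (inf_assoc _ _ _).symm⟩
  rw [himp_inf_himp_of_le inf_le_right, inf_comm (_ ⇨ _) C''.1, himp_inf_himp_of_le inf_le_left]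
  ac_rfl

theorem cComp_cE {C : B × B} (hC : IsContract C) : cComp C cE = C := by
  simp only [cComp_eq_himp, cE, inf_top_eq, hC.himp_eq]

theorem cE_cComp {C : B × B} (hC : IsContract C) : cComp cE C = C := by
  rw [cComp_comm, cComp_cE hC]

theorem cComp_cZero (C : B × B) : cComp C cZero = cZero := by
  simp [cComp_eq_himp, cZero]

theorem cZero_cComp (C : B × B) : cComp cZero C = cZero := by
  rw [cComp_comm, cComp_cZero]

theorem cOr_cComp (C : B × B) {C' C'' : B × B} (hC' : IsContract C') (hC'' : IsContract C'') :
    cComp (cOr C' C'') C = cOr (cComp C' C) (cComp C'' C) := by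
  rw [cComp_comm, cComp_cOr C hC' hC'', cComp_comm C, cComp_comm C]

theorem cRecip_cRecip {α : Type*} (C : α × α) : cRecip (cRecip C) = C := rfl

theorem cRecip_cComp (C C' : B × B) : cRecip (cComp C C') = cMerge (cRecip C) (cRecip C') := rfl

theorem cRecip_cOr (C C' : B × B) : cRecip (cOr C C') = cAnd (cRecip C) (cRecip C') := rfl

theorem cRecip_cE : cRecip (cE (B := B)) = cE := rfl

theorem cRecip_cZero : cRecip (cZero (B := B)) = cOne := rfl

theorem cAnd_assoc (C C' C'' : B × B) : cAnd C (cAnd C' C'') = cAnd (cAnd C C') C'' :=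
  congrArg cRecip (cOr_assoc (cRecip C) (cRecip C') (cRecip C''))

theorem cAnd_comm (C C' : B × B) : cAnd C C' = cAnd C' C :=
  congrArg cRecip (cOr_comm (cRecip C) (cRecip C'))

theorem cAnd_cOne (C : B × B) : cAnd C cOne = C :=
  congrArg cRecip (cOr_cZero (cRecip C))

theorem cMerge_assoc (C C' C'' : B × B) :
    cMerge C (cMerge C' C'') = cMerge (cMerge C C') C'' :=
  congrArg cRecip (cComp_assoc (cRecip C) (cRecip C') (cRecip C''))

theorem cMerge_cE {C : B × B} (hC : IsContract C) : cMerge C cE = C :=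
  congrArg cRecip (cComp_cE hC.cRecip)

theorem cE_cMerge {C : B × B} (hC : IsContract C) : cMerge cE C = C :=
  congrArg cRecip (cE_cComp hC.cRecip)

theorem cMerge_cOne (C : B × B) : cMerge C cOne = cOne :=
  congrArg cRecip (cComp_cZero (cRecip C))

theorem cOne_cMerge (C : B × B) : cMerge cOne C = cOne :=
  congrArg cRecip (cZero_cComp (cRecip C))

theorem cMerge_cAnd (C : B × B) {C' C'' : B × B} (hC' : IsContract C')
    (hC'' : IsContract C'') : cMerge C (cAnd C' C'') = cAnd (cMerge C C') (cMerge C C'') :=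
  congrArg cRecip (cComp_cOr (cRecip C) hC'.cRecip hC''.cRecip)

theorem cAnd_cMerge (C : B × B) {C' C'' : B × B} (hC' : IsContract C')
    (hC'' : IsContract C'') : cMerge (cAnd C' C'') C = cAnd (cMerge C' C) (cMerge C'' C) :=
  congrArg cRecip (cOr_cComp (cRecip C) hC'.cRecip hC''.cRecip)

theorem composition_and_merging_semirings_and_reciprocal_isomorphism :
    -- the composition semiring (contracts, ∥, ∨, e, 0)
    (∀ C C' C'' : B × B, IsContract C → IsContract C' → IsContract C'' →
      cOr C (cOr C' C'') = cOr (cOr C C') C'') ∧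
    (∀ C C' : B × B, IsContract C → IsContract C' → cOr C C' = cOr C' C) ∧
    (∀ C : B × B, IsContract C → cOr C (cZero (B := B)) = C) ∧
    (∀ C C' C'' : B × B, IsContract C → IsContract C' → IsContract C'' →
      cComp C (cComp C' C'') = cComp (cComp C C') C'') ∧
    (∀ C : B × B, IsContract C → cComp C (cE (B := B)) = C ∧ cComp (cE (B := B)) C = C) ∧
    (∀ C C' C'' : B × B, IsContract C → IsContract C' → IsContract C'' →
      cComp C (cOr C' C'') = cOr (cComp C C') (cComp C C'') ∧
      cComp (cOr C' C'') C = cOr (cComp C' C) (cComp C'' C)) ∧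
    (∀ C : B × B, IsContract C →
      cComp C (cZero (B := B)) = cZero ∧ cComp (cZero (B := B)) C = cZero) ∧
    -- the merging semiring (contracts, •, ∧, e, 1)
    (∀ C C' C'' : B × B, IsContract C → IsContract C' → IsContract C'' →
      cAnd C (cAnd C' C'') = cAnd (cAnd C C') C'') ∧
    (∀ C C' : B × B, IsContract C → IsContract C' → cAnd C C' = cAnd C' C) ∧
    (∀ C : B × B, IsContract C → cAnd C (cOne (B := B)) = C) ∧
    (∀ C C' C'' : B × B, IsContract C → IsContract C' → IsContract C'' →
      cMerge C (cMerge C' C'') = cMerge (cMerge C C') C'') ∧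
    (∀ C : B × B, IsContract C → cMerge C (cE (B := B)) = C ∧ cMerge (cE (B := B)) C = C) ∧
    (∀ C C' C'' : B × B, IsContract C → IsContract C' → IsContract C'' →
      cMerge C (cAnd C' C'') = cAnd (cMerge C C') (cMerge C C'') ∧
      cMerge (cAnd C' C'') C = cAnd (cMerge C' C) (cMerge C'' C)) ∧
    (∀ C : B × B, IsContract C →
      cMerge C (cOne (B := B)) = cOne ∧ cMerge (cOne (B := B)) C = cOne) ∧
    -- the reciprocal is a semiring isomorphism between the two semirings
    (∀ C : B × B, IsContract C → IsContract (cRecip C)) ∧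
    (∀ C : B × B, cRecip (cRecip C) = C) ∧
    (∀ C C' : B × B, IsContract C → IsContract C' →
      cRecip (cComp C C') = cMerge (cRecip C) (cRecip C')) ∧
    (∀ C C' : B × B, IsContract C → IsContract C' →
      cRecip (cOr C C') = cAnd (cRecip C) (cRecip C')) ∧
    cRecip (cE (B := B)) = cE ∧
    cRecip (cZero (B := B)) = cOne :=
  ⟨fun C C' C'' _ _ _ => cOr_assoc C C' C'',
    fun C C' _ _ => cOr_comm C C',
    fun C _ => cOr_cZero C,
    fun C C' C'' _ _ _ => cComp_assoc C C' C'',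
    fun _ hC => ⟨cComp_cE hC, cE_cComp hC⟩,
    fun C _ _ _ hC' hC'' => ⟨cComp_cOr C hC' hC'', cOr_cComp C hC' hC''⟩,
    fun C _ => ⟨cComp_cZero C, cZero_cComp C⟩,
    fun C C' C'' _ _ _ => cAnd_assoc C C' C'',
    fun C C' _ _ => cAnd_comm C C',
    fun C _ => cAnd_cOne C,
    fun C C' C'' _ _ _ => cMerge_assoc C C' C'',
    fun _ hC => ⟨cMerge_cE hC, cE_cMerge hC⟩,
    fun C _ _ _ hC' hC'' => ⟨cMerge_cAnd C hC' hC'', cAnd_cMerge C hC' hC''⟩,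
    fun C _ => ⟨cMerge_cOne C, cOne_cMerge C⟩,
    fun _ hC => hC.cRecip,
    cRecip_cRecip,
    fun C C' _ _ => cRecip_cComp C C',
    fun C C' _ _ => cRecip_cOr C C',
    cRecip_cE,
    cRecip_cZero⟩
end

section
/- Let B be a Boolean algebra with ⊥ ≠ ⊤, and let β be a map from contracts over B to contracts over B satisfying β(C ∥ C') = β(C) ∧ β(C'), β(C ∨ C') = β(C) ∨ β(C'), β(e) = 1, and β(0) = 0 for all contracts C, C'. Then β(a, ⊤) = 1 for every a ∈ B; in particular β(e) = β(1) = 1 while e ≠ 1, so β is not injective. Hence there is no semiring isomorphism from the composition semiring (contracts, ∥, ∨, e, 0) to the conjunction semiring (contracts, ∧, ∨, 1, 0). -/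
variable {B : Type*} [BooleanAlgebra B]

/- `β` preserves `∨`, and every contract `(a, ⊤)` equals `(a, ⊤) ∨ e`, so
`β (a, ⊤) = β (a, ⊤) ∨ 1 = 1` because `1` absorbs under `∨`. In particular `β` identifies
`e = (⊤, ⊤)` with `1 = (⊥, ⊤)`. -/

theorem isContract_top_right (a : B) : IsContract (a, (⊤ : B)) := sup_top_eq a

theorem cOr_cE (C : B × B) : cOr C cE = (C.1, ⊤) := by
  simp [cOr, cE]

theorem cOr_cOne (C : B × B) : cOr C cOne = cOne := by
  simp [cOr, cOne]

theorem cE_ne_cOne (h : (⊥ : B) ≠ ⊤) : cE (B := B) ≠ cOne :=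
  fun hEq => h (congrArg Prod.fst hEq).symm

theorem eq_cOne_of_map_cOr {β : B × B → B × B}
    (hadd : ∀ C C' : B × B, IsContract C → IsContract C' →
      β (cOr C C') = cOr (β C) (β C'))
    (hone : β cE = cOne) (a : B) : β (a, ⊤) = cOne := by
  have hE : IsContract (cE (B := B)) := isContract_top_right ⊤
  calc β (a, ⊤) = β (cOr (a, ⊤) cE) := by rw [cOr_cE]
    _ = cOr (β (a, ⊤)) cOne := by rw [hadd _ _ (isContract_top_right a) hE, hone]
    _ = cOne := cOr_cOne _

theorem no_semiring_isomorphism_composition_to_conjunction_general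
    (h : (⊥ : B) ≠ ⊤)
    (β : B × B → B × B)
    (hadd : ∀ C C' : B × B, IsContract C → IsContract C' →
      β (cOr C C') = cOr (β C) (β C'))
    (hone : β (cE (B := B)) = cOne) :
    (∀ a : B, β (a, (⊤ : B)) = cOne) ∧
    β (cE (B := B)) = cOne ∧ β (cOne (B := B)) = cOne ∧ cE (B := B) ≠ cOne ∧
    ¬ (∀ C C' : B × B, IsContract C → IsContract C' → β C = β C' → C = C') := by
  have hβ : ∀ a : B, β (a, ⊤) = cOne := eq_cOne_of_map_cOr hadd hone
  have hβone : β (cOne (B := B)) = cOne := hβ ⊥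
  refine ⟨hβ, hone, hβone, cE_ne_cOne h, fun hinj => cE_ne_cOne h ?_⟩
  exact hinj cE cOne (isContract_top_right ⊤) (isContract_top_right ⊥) (hone.trans hβone.symm)

theorem no_semiring_isomorphism_composition_to_conjunction
    (h : (⊥ : B) ≠ ⊤)
    (β : B × B → B × B)
    (hmul : ∀ C C' : B × B, IsContract C → IsContract C' →
      β (cComp C C') = cAnd (β C) (β C'))
    (hadd : ∀ C C' : B × B, IsContract C → IsContract C' →
      β (cOr C C') = cOr (β C) (β C'))
    (hone : β (cE (B := B)) = cOne)
    (hzero : β (cZero (B := B)) = cZero) :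
    (∀ a : B, β (a, (⊤ : B)) = cOne) ∧
    β (cE (B := B)) = cOne ∧ β (cOne (B := B)) = cOne ∧ cE (B := B) ≠ cOne ∧
    ¬ (∀ C C' : B × B, IsContract C → IsContract C' → β C = β C' → C = C') :=
  no_semiring_isomorphism_composition_to_conjunction_general h β hadd hone
end
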